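/- arXiv:2509.15093 — 2 statements merged into one kernel-verified Lean document; each statement's English description precedes it below -/
import Mathlib

section
/- Let f_j : D → X' be continuous open maps from a domain D in a locally compact metric space X to a metric space X', converging locally uniformly to f : D → X'. Suppose there exist ε₁ > 0 and r₀ > 0 with closure(B(x₀, ε₁)) compact in D such that f_j(B(x₀, ε₁)) ⊃ B(f_j(x₀), r₀) for every j. Then f(closure(B(x₀, ε₁))) ⊃ B(f(x₀), r₀/2). -/
open Metric Set Filter Topology

theorem TendstoUniformlyOn.mem_image_of_eventually_mem_image {ι α β : Type*}
    [TopologicalSpace α] [UniformSpace β] [T2Space β] {F : ι → α → β} {f : α → β}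
    {l : Filter ι} [l.NeBot] {K : Set α} {y : β} (hK : IsCompact K)
    (hF : TendstoUniformlyOn F f l K) (hf : ContinuousOn f K)
    (hy : ∀ᶠ n in l, y ∈ F n '' K) : y ∈ f '' K := by
  obtain ⟨-, a, -⟩ := hy.exists
  have : Nonempty α := ⟨a⟩
  obtain ⟨x, hx⟩ : ∃ x : ι → α, ∀ᶠ n in l, x n ∈ K ∧ F n (x n) = y :=
    ⟨fun n => Classical.epsilon fun a => a ∈ K ∧ F n a = y,
      hy.mono fun _ ha => Classical.epsilon_spec ha⟩
  -- Along an ultrafilter finer than `l`, the preimages `x n` converge in the compact set `K`.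
  set u := Ultrafilter.of l
  have hxu : ∀ᶠ n in (u : Filter ι), x n ∈ K ∧ F n (x n) = y := Ultrafilter.of_le l hx
  obtain ⟨z, hzK, hxz⟩ :=
    hK.ultrafilter_le_nhds (u.map x) (le_principal_iff.mpr (hxu.mono fun _ h => h.1))
  have hlim : Tendsto (fun n => F n (x n)) u (𝓝 (f z)) :=
    TendstoUniformlyOn.tendsto_comp (fun V hV => Ultrafilter.of_le l (hF V hV)) (hf z hzK)
      (tendsto_nhdsWithin_iff.mpr ⟨hxz, hxu.mono fun _ h => h.1⟩)
  have hconst : Tendsto (fun n => F n (x n)) u (𝓝 y) :=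
    tendsto_const_nhds.congr' (hxu.mono fun _ h => h.2.symm)
  exact ⟨z, hzK, tendsto_nhds_unique hlim hconst⟩

theorem limit_covers_half_ball_general {X X' : Type*} [MetricSpace X] [MetricSpace X']
    (D : Set X)
    (f : X → X') (fj : ℕ → X → X')
    (hcont : ∀ j, ContinuousOn (fj j) D)
    (hconv : TendstoLocallyUniformlyOn fj f atTop D)
    (x₀ : X) (ε₁ r₀ : ℝ) (hε₁ : 0 < ε₁)
    (hcomp : IsCompact (closure (ball x₀ ε₁))) (hsub : closure (ball x₀ ε₁) ⊆ D)
    (hcover : ∀ j, ball (fj j x₀) r₀ ⊆ fj j '' ball x₀ ε₁) :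
    ball (f x₀) (r₀ / 2) ⊆ f '' closure (ball x₀ ε₁) := by
  have hU : TendstoUniformlyOn fj f atTop (closure (ball x₀ ε₁)) :=
    (tendstoLocallyUniformlyOn_iff_tendstoUniformlyOn_of_compact hcomp).mp (hconv.mono hsub)
  have hf : ContinuousOn f (closure (ball x₀ ε₁)) :=
    hU.continuousOn (Frequently.of_forall fun j => (hcont j).mono hsub)
  have hx₀ : Tendsto (fun j => fj j x₀) atTop (𝓝 (f x₀)) :=
    hU.tendsto_at (subset_closure (mem_ball_self hε₁))
  intro y hy
  have hyr : dist y (f x₀) < r₀ := by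
    linarith [mem_ball.mp hy, dist_nonneg (x := y) (y := f x₀)]
  refine hU.mem_image_of_eventually_mem_image hcomp hf ?_
  filter_upwards [(tendsto_const_nhds.dist hx₀).eventually (gt_mem_nhds hyr)] with j hj
  exact image_mono subset_closure (hcover j hj)

/-- If continuous open maps `f_j : D → X'` converge locally uniformly on `D` to `f`, the
closure of `B(x₀, ε₁)` is a compact subset of `D`, and `f_j(B(x₀, ε₁)) ⊃ B(f_j(x₀), r₀)`
for every `j`, then `f(closure B(x₀, ε₁)) ⊃ B(f(x₀), r₀/2)`. -/
theorem limit_covers_half_ball {X X' : Type*} [MetricSpace X] [MetricSpace X']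
    [LocallyCompactSpace X] (D : Set X) (hD : IsOpen D) (hDconn : IsConnected D)
    (f : X → X') (fj : ℕ → X → X')
    (hcont : ∀ j, ContinuousOn (fj j) D)
    (hopen : ∀ j, ∀ U ⊆ D, IsOpen U → IsOpen (fj j '' U))
    (hconv : TendstoLocallyUniformlyOn fj f atTop D)
    (x₀ : X) (ε₁ r₀ : ℝ) (hε₁ : 0 < ε₁) (hr₀ : 0 < r₀)
    (hcomp : IsCompact (closure (ball x₀ ε₁))) (hsub : closure (ball x₀ ε₁) ⊆ D)
    (hcover : ∀ j, ball (fj j x₀) r₀ ⊆ fj j '' ball x₀ ε₁) :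
    ball (f x₀) (r₀ / 2) ⊆ f '' closure (ball x₀ ε₁) :=
  limit_covers_half_ball_general D f fj hcont hconv x₀ ε₁ r₀ hε₁ hcomp hsub hcover
end

section
/- Let f : D → X' be continuous and suppose D₀ = ⋂_{k=1}^∞ closure(α([t_k, c))) where α : [0, c) → K is a path into a compact set K ⊂ D and t_k ↑ c. If f is constant on each connected subset of D₀ only when that subset is a single point (f is discrete), and f ∘ α extends continuously to [0, c], then D₀ is a nonempty, compact, connected set on which f is constant; if moreover f is discrete, the connected component of D₀ ∩ D containing any of its points is a single point. -/
/-!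
The tails `closure (α '' Ico (t k) c)` are a decreasing sequence of compact connected sets, so
their intersection `D₀` is a continuum. Since the `Ico (t k) c` form a basis of `𝓝[<] c`, the
points of `D₀` are exactly the cluster points of `α` at `c⁻`; continuity of `f` then forces `f` to
equal the limit `β c` of `f ∘ α` on all of `D₀`. Hence a nondegenerate connected piece of `D₀`
would consist of accumulation points of a single fibre of `f`.
-/

open Set Filter Topology

theorem IsConnected.iInter_of_antitone {X : Type*} [TopologicalSpace X] [T2Space X]
    {S : ℕ → Set X} (hS : Antitone S) (hcpt : ∀ k, IsCompact (S k))
    (hconn : ∀ k, IsConnected (S k)) : IsConnected (⋂ k, S k) := by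
  have hcl : ∀ k, IsClosed (S k) := fun k => (hcpt k).isClosed
  refine ⟨IsCompact.nonempty_iInter_of_sequence_nonempty_isCompact_isClosed S
    (fun k => hS k.le_succ) (fun k => (hconn k).nonempty) (hcpt 0) hcl, ?_⟩
  have hcptI : IsCompact (⋂ k, S k) := (hcpt 0).of_isClosed_subset (isClosed_iInter hcl)
    (iInter_subset S 0)
  rw [isPreconnected_iff_subset_of_fully_disjoint_closed (isClosed_iInter hcl)]
  intro u v hu hv huv hdisj
  obtain ⟨U, V, hU, hV, huU, hvV, hUV⟩ := SeparatedNhds.of_isCompact_isCompact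
    (hcptI.inter_right hu) (hcptI.inter_right hv)
    (hdisj.mono inter_subset_right inter_subset_right)
  have hUV_nhds : ∀ x ∈ ⋂ k, S k, U ∪ V ∈ 𝓝 x := fun x hx =>
    (hU.union hV).mem_nhds <| (huv hx).imp (fun h => huU ⟨hx, h⟩) (fun h => hvV ⟨hx, h⟩)
  obtain ⟨k, hk⟩ := exists_subset_nhds_of_isCompact' hS.directed_ge hcpt hcl hUV_nhds
  refine ((hconn k).isPreconnected.subset_or_subset hU hV hUV hk).imp ?_ ?_
  · intro hkU x hx
    exact (huv hx).resolve_right fun hxv =>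
      hUV.le_bot ⟨hkU (mem_iInter.1 hx k), hvV ⟨hx, hxv⟩⟩
  · intro hkV x hx
    exact (huv hx).resolve_left fun hxu =>
      hUV.le_bot ⟨huU ⟨hx, hxu⟩, hkV (mem_iInter.1 hx k)⟩

theorem Filter.Tendsto.hasBasis_nhdsLT {α ι : Type*} [LinearOrder α] [TopologicalSpace α]
    [OrderTopology α] {l : Filter ι} [l.NeBot] {t : ι → α} {c : α}
    (ht : Tendsto t l (𝓝 c)) (htlt : ∀ i, t i < c) :
    (𝓝[<] c).HasBasis (fun _ => True) (fun i => Ico (t i) c) := by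
  refine ⟨fun s => ⟨fun hs => ?_, fun ⟨i, _, hi⟩ => mem_of_superset (Ico_mem_nhdsLT (htlt i)) hi⟩⟩
  obtain ⟨i₀⟩ : Nonempty ι := l.nonempty_of_neBot
  obtain ⟨a, ha, has⟩ := (mem_nhdsLT_iff_exists_Ioo_subset' (htlt i₀)).1 hs
  obtain ⟨i, hi⟩ := (ht.eventually (lt_mem_nhds ha)).exists
  exact ⟨i, trivial, fun s hs => has ⟨hi.trans_le hs.1, hs.2⟩⟩

theorem MapClusterPt.eq_of_continuousWithinAt {ι X Y : Type*} [TopologicalSpace X]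
    [TopologicalSpace Y] [T2Space Y] {F : Filter ι} {u : ι → X} {f : X → Y} {D : Set X} {x : X}
    {y : Y} (hx : MapClusterPt x F u) (hf : ContinuousWithinAt f D x) (huD : ∀ᶠ i in F, u i ∈ D)
    (hfu : Tendsto (f ∘ u) F (𝓝 y)) : f x = y := by
  have hfx : MapClusterPt (f x) F (f ∘ u) :=
    hx.tendsto_comp' (hf.mono_left (inf_le_inf_left _ (le_principal_iff.2 huD)))
  by_contra hne
  exact clusterPt_iff_not_disjoint.1 (hfx.clusterPt.mono hfu) (disjoint_nhds_nhds.2 hne)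

theorem mem_iInter_closure_image_Ico_iff_mapClusterPt {α X ι : Type*} [LinearOrder α]
    [TopologicalSpace α] [OrderTopology α] [TopologicalSpace X] {l : Filter ι} [l.NeBot]
    {t : ι → α} {c : α} (ht : Tendsto t l (𝓝 c)) (htlt : ∀ i, t i < c) {u : α → X} {x : X} :
    x ∈ ⋂ i, closure (u '' Ico (t i) c) ↔ MapClusterPt x (𝓝[<] c) u := by
  simp [MapClusterPt, ((ht.hasBasis_nhdsLT htlt).map u).clusterPt_iff_forall_mem_closure]

theorem connectedComponentIn_eq_singleton_of_not_accPt {X : Type*} [TopologicalSpace X]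
    [T1Space X] {A : Set X} {x : X} (hx : x ∈ A) (hacc : ¬AccPt x (𝓟 A)) :
    connectedComponentIn A x = {x} := by
  by_contra hne
  have hxC := mem_connectedComponentIn hx
  have hnt : (connectedComponentIn A x).Nontrivial := (nontrivial_iff_ne_singleton hxC).2 hne
  exact hacc <| (isPreconnected_connectedComponentIn.preperfect_of_nontrivial hnt x hxC).mono
    (principal_mono.2 (connectedComponentIn_subset A x))

theorem limit_set_of_path_tail_general {X X' : Type*} [MetricSpace X] [MetricSpace X']
    (D : Set X) (K : Set X) (hK : IsCompact K) (hKD : K ⊆ D)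
    (c : ℝ) (α : ℝ → X) (hα : ContinuousOn α (Ico 0 c))
    (hαK : ∀ s ∈ Ico (0:ℝ) c, α s ∈ K)
    (t : ℕ → ℝ) (ht0 : 0 ≤ t 0) (htmono : Monotone t) (htlt : ∀ k, t k < c)
    (htlim : Tendsto t atTop (nhds c))
    (f : X → X') (hf : ContinuousOn f D)
    (hext : ∃ β : ℝ → X', ContinuousOn β (Icc 0 c) ∧ ∀ s ∈ Ico (0:ℝ) c, β s = f (α s)) :
    ((⋂ k, closure (α '' Ico (t k) c)).Nonempty ∧
      IsCompact (⋂ k, closure (α '' Ico (t k) c)) ∧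
      IsConnected (⋂ k, closure (α '' Ico (t k) c)) ∧
      ∀ x ∈ ⋂ k, closure (α '' Ico (t k) c), ∀ x' ∈ ⋂ k, closure (α '' Ico (t k) c),
        f x = f x') ∧
    ((∀ (y : X') (x : X), x ∈ D → ¬ AccPt x (Filter.principal (f ⁻¹' {y}))) →
      ∀ x ∈ ⋂ k, closure (α '' Ico (t k) c),
        connectedComponentIn (⋂ k, closure (α '' Ico (t k) c)) x = {x}) := by
  obtain ⟨β, hβ, hβα⟩ := hext
  set D₀ := ⋂ k, closure (α '' Ico (t k) c)
  have hsub : ∀ k, Ico (t k) c ⊆ Ico 0 c := fun k =>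
    Ico_subset_Ico_left (ht0.trans (htmono k.zero_le))
  have htailK : ∀ k, closure (α '' Ico (t k) c) ⊆ K := fun k =>
    closure_minimal (image_subset_iff.2 fun s hs => hαK s (hsub k hs)) hK.isClosed
  have hD₀D : D₀ ⊆ D := fun x hx => hKD (htailK 0 (mem_iInter.1 hx 0))
  have hconn : IsConnected D₀ := IsConnected.iInter_of_antitone
    (fun j k hjk => closure_mono (image_mono (Ico_subset_Ico_left (htmono hjk))))
    (fun k => hK.of_isClosed_subset isClosed_closure (htailK k))
    (fun k => ((isConnected_Ico (htlt k)).image α (hα.mono (hsub k))).closure)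
  have hpath : ∀ᶠ s in 𝓝[<] c, s ∈ Ico 0 c :=
    mem_of_superset (Ico_mem_nhdsLT (htlt 0)) (Ico_subset_Ico_left ht0)
  have hlim : Tendsto (f ∘ α) (𝓝[<] c) (𝓝 (β c)) :=
    ((hβ c ⟨ht0.trans (htlt 0).le, le_rfl⟩).mono_left
      (nhdsWithin_le_iff.2 (mem_of_superset hpath Ico_subset_Icc_self))).congr'
      (hpath.mono hβα)
  have hconst : ∀ x ∈ D₀, f x = β c := fun x hx =>
    ((mem_iInter_closure_image_Ico_iff_mapClusterPt htlim htlt).1 hx).eq_of_continuousWithinAt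
      (hf x (hD₀D hx)) (hpath.mono fun s hs => hKD (hαK s hs)) hlim
  refine ⟨⟨hconn.nonempty, hK.of_isClosed_subset (isClosed_iInter fun _ => isClosed_closure)
    ((iInter_subset _ 0).trans (htailK 0)), hconn, fun x hx x' hx' => by
      rw [hconst x hx, hconst x' hx']⟩, fun hdisc x hx => ?_⟩
  refine connectedComponentIn_eq_singleton_of_not_accPt hx fun hacc => hdisc (f x) x (hD₀D hx) ?_
  exact hacc.mono (principal_mono.2 fun y hy => (hconst y hy).trans (hconst x hx).symm)

/-- Let `α : [0, c) → K` be a path into a compact `K ⊆ D`, `t_k ↑ c`, and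
`D₀ = ⋂_k closure(α([t_k, c)))`. If `f : D → X'` is continuous and `f ∘ α` extends
continuously to `[0, c]`, then `D₀` is a nonempty compact connected set on which `f` is
constant; if moreover `f` is discrete (no fibre accumulates in `D`), then the connected
component of any point of `D₀` in `D₀` is a singleton. -/
theorem limit_set_of_path_tail {X X' : Type*} [MetricSpace X] [MetricSpace X']
    (D : Set X) (hD : IsOpen D) (K : Set X) (hK : IsCompact K) (hKD : K ⊆ D)
    (c : ℝ) (hc : 0 < c) (α : ℝ → X) (hα : ContinuousOn α (Ico 0 c))
    (hαK : ∀ s ∈ Ico (0:ℝ) c, α s ∈ K)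
    (t : ℕ → ℝ) (ht0 : 0 ≤ t 0) (htmono : Monotone t) (htlt : ∀ k, t k < c)
    (htlim : Tendsto t atTop (nhds c))
    (f : X → X') (hf : ContinuousOn f D)
    (hext : ∃ β : ℝ → X', ContinuousOn β (Icc 0 c) ∧ ∀ s ∈ Ico (0:ℝ) c, β s = f (α s)) :
    ((⋂ k, closure (α '' Ico (t k) c)).Nonempty ∧
      IsCompact (⋂ k, closure (α '' Ico (t k) c)) ∧
      IsConnected (⋂ k, closure (α '' Ico (t k) c)) ∧
      ∀ x ∈ ⋂ k, closure (α '' Ico (t k) c), ∀ x' ∈ ⋂ k, closure (α '' Ico (t k) c),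
        f x = f x') ∧
    ((∀ (y : X') (x : X), x ∈ D → ¬ AccPt x (Filter.principal (f ⁻¹' {y}))) →
      ∀ x ∈ ⋂ k, closure (α '' Ico (t k) c),
        connectedComponentIn (⋂ k, closure (α '' Ico (t k) c)) x = {x}) :=
  limit_set_of_path_tail_general D K hK hKD c α hα hαK t ht0 htmono htlt htlim f hf hext
end
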